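/- arXiv:1310.7838 — 2 statements merged into one kernel-verified Lean document; each statement's English description precedes it below -/
import Mathlib

section
/- Let n be odd, J < n/2, and θ_l = -(n+1)π/n + 2πl/n. Define the smoothing kernel S_l(θ) = 1/n + (2/n)∑_{j=1}^J cos(j(θ − θ_l)). Let ρ: ℝ → ℝ be 2π-periodic and even. Then for all m ∈ {1,…,n} and θ ∈ [-π,π]: ∑_{l=1}^n ρ(θ_m − θ_l) S_l(θ) = σ²₀,ₙ + ∑_{j=1}^J σ²ⱼ,ₙ cos(j(θ − θ_m)), where σ²₀,ₙ = (1/n)∑_l ρ(θ_l) and σ²ⱼ,ₙ = (2/n)∑_l ρ(θ_l)cos(jθ_l). -/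
/-!
Since `n = 2k + 1` is odd, `θ_l = 2π(l - (k + 1))/n`, so modulo `2π` both the points `θ_l` and the
differences `θ_m - θ_l` (for `l = 1, …, n`) run exactly once through the angles `2πk/n`,
`k = 0, …, n - 1`; sums of `2π`-periodic functions over them therefore agree. Expanding
`cos (j (x - θ_l))` about `θ_m` by the addition formula, the cosine terms give `σ_j`, and the sine
terms vanish because `t ↦ ρ t sin (j t)` is odd and the angles `2πk/n` are symmetric modulo `2π`.
-/

open Real Finset

namespace Function.Periodic

variable {M : Type*} [AddCommGroup M] {F : ℤ → M} {n : ℕ}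

theorem sum_range_add (hF : Periodic F n) (a : ℤ) :
    ∑ l ∈ range n, F (a + l) = ∑ l ∈ range n, F l := by
  have step : ∀ b : ℤ, ∑ l ∈ range n, F (b + 1 + l) = ∑ l ∈ range n, F (b + l) := by
    intro b
    have h := (sum_range_succ' (fun l : ℕ => F (b + l)) n).symm.trans
      (sum_range_succ (fun l : ℕ => F (b + l)) n)
    simp only [Nat.cast_add, Nat.cast_one, Nat.cast_zero, add_zero, hF b] at h
    simpa only [add_assoc, add_comm (1 : ℤ)] using add_right_cancel h
  induction a using Int.induction_on with
  | zero => simp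
  | succ b ih => rw [step, ih]
  | pred b ih => rw [← ih, ← step, sub_add_cancel]

theorem sum_range_sub (hF : Periodic F n) (a : ℤ) :
    ∑ l ∈ range n, F (a - l) = ∑ l ∈ range n, F l := by
  rw [← sum_range_reflect, ← hF.sum_range_add (a - (n - 1))]
  refine sum_congr rfl fun l hl => congrArg F ?_
  have : l < n := mem_range.mp hl
  rw [Nat.cast_sub (by omega), Nat.cast_sub (by omega)]
  ring

theorem sum_range_eq_zero_of_odd {F : ℤ → ℝ} (hF : Periodic F n) (hodd : ∀ k, F (-k) = -F k) :
    ∑ l ∈ range n, F l = 0 := by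
  have h := hF.sum_range_sub 0
  simp only [zero_sub, hodd, sum_neg_distrib] at h
  linarith

end Function.Periodic

theorem Function.Periodic.comp_two_pi_mul_div {f : ℝ → ℝ} (hf : Periodic f (2 * π)) (n : ℕ) :
    Periodic (fun k : ℤ => f (2 * π * k / n)) n := by
  intro k
  rcases eq_or_ne n 0 with rfl | hn
  · simp
  · have : 2 * π * ((k + n : ℤ) : ℝ) / n = 2 * π * k / n + 2 * π := by
      push_cast; field_simp
    simp only [this, hf _]

theorem sum_mul_const_add_mul_sum_cos {ι : Type*} (s : Finset ι) (w t : ι → ℝ) (a b x c : ℝ)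
    (J : ℕ) :
    ∑ l ∈ s, w l * (a + b * ∑ j ∈ Icc 1 J, cos (j * (x - t l))) =
      a * ∑ l ∈ s, w l + ∑ j ∈ Icc 1 J, b * (cos (j * (x - c)) * ∑ l ∈ s, w l * cos (j * (c - t l))
        - sin (j * (x - c)) * ∑ l ∈ s, w l * sin (j * (c - t l))) := by
  simp only [mul_add, mul_sum, sum_add_distrib]
  rw [sum_comm]
  congr 1
  · exact sum_congr rfl fun _ _ => by ring
  · refine sum_congr rfl fun j _ => ?_
    rw [← sum_sub_distrib, mul_sum]
    refine sum_congr rfl fun l _ => ?_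
    rw [show (j : ℝ) * (x - t l) = j * (x - c) + j * (c - t l) by ring, cos_add]
    ring

theorem Real.cos_nat_mul_periodic (j : ℕ) : Function.Periodic (fun t => cos (j * t)) (2 * π) :=
  fun t => by simp only [mul_add, cos_add_nat_mul_two_pi]

theorem Real.sin_nat_mul_periodic (j : ℕ) : Function.Periodic (fun t => sin (j * t)) (2 * π) :=
  fun t => by simp only [mul_add, sin_add_nat_mul_two_pi]

noncomputable def uniformGrid (n l : ℕ) : ℝ := -((n : ℝ) + 1) * π / n + 2 * π * l / n

theorem uniformGrid_sub (n m l : ℕ) :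
    uniformGrid n m - uniformGrid n l = 2 * π * ((m - l : ℤ) : ℝ) / n := by
  unfold uniformGrid; push_cast; ring

theorem uniformGrid_two_mul_add_one (k l : ℕ) :
    uniformGrid (2 * k + 1) l = 2 * π * ((l - (k + 1) : ℤ) : ℝ) / (2 * k + 1 : ℕ) := by
  unfold uniformGrid; push_cast; ring

section GridSums

variable {f : ℝ → ℝ} (hf : Function.Periodic f (2 * π))
include hf

theorem sum_Icc_comp_uniformGrid_sub (n m : ℕ) :
    ∑ l ∈ Icc 1 n, f (uniformGrid n m - uniformGrid n l) = ∑ k ∈ range n, f (2 * π * k / n) := by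
  simp only [uniformGrid_sub, ← Ico_add_one_right_eq_Icc, sum_Ico_eq_sum_range,
    add_tsub_cancel_right]
  convert (hf.comp_two_pi_mul_div n).sum_range_sub (m - 1) using 3 <;> push_cast <;> ring_nf

theorem sum_Icc_comp_uniformGrid {n : ℕ} (hn : Odd n) :
    ∑ l ∈ Icc 1 n, f (uniformGrid n l) = ∑ k ∈ range n, f (2 * π * k / n) := by
  obtain ⟨k, rfl⟩ := hn
  simp only [uniformGrid_two_mul_add_one, ← Ico_add_one_right_eq_Icc, sum_Ico_eq_sum_range,
    add_tsub_cancel_right]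
  convert (hf.comp_two_pi_mul_div _).sum_range_add (-k) using 3 <;> push_cast <;> ring_nf

theorem sum_Icc_comp_uniformGrid_sub_eq_zero_of_odd (hodd : ∀ t, f (-t) = -f t) (n m : ℕ) :
    ∑ l ∈ Icc 1 n, f (uniformGrid n m - uniformGrid n l) = 0 := by
  rw [sum_Icc_comp_uniformGrid_sub hf]
  convert (hf.comp_two_pi_mul_div n).sum_range_eq_zero_of_odd fun k => ?_ using 3
  · push_cast; rfl
  · push_cast; rw [← hodd]; ring_nf

end GridSums

theorem smoothing_kernel_covariance_sum_general
    (n : ℕ) (hodd : Odd n)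
    (J : ℕ)
    (θ : ℕ → ℝ)
    (hθ : ∀ l, θ l = -((n : ℝ) + 1) * Real.pi / n + 2 * Real.pi * l / n)
    (S : ℕ → ℝ → ℝ)
    (hS : ∀ l x, S l x =
      1 / (n : ℝ) + (2 / (n : ℝ)) * ∑ j ∈ Finset.Icc 1 J, Real.cos (j * (x - θ l)))
    (ρ : ℝ → ℝ) (hρeven : ∀ x, ρ (-x) = ρ x)
    (hρper : Function.Periodic ρ (2 * Real.pi))
    (σ0 : ℝ) (hσ0 : σ0 = (1 / (n : ℝ)) * ∑ l ∈ Finset.Icc 1 n, ρ (θ l))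
    (σ : ℕ → ℝ)
    (hσ : ∀ j, σ j = (2 / (n : ℝ)) * ∑ l ∈ Finset.Icc 1 n, ρ (θ l) * Real.cos (j * θ l)) :
    ∀ m ∈ Finset.Icc 1 n, ∀ x ∈ Set.Icc (-Real.pi) Real.pi,
      ∑ l ∈ Finset.Icc 1 n, ρ (θ m - θ l) * S l x =
        σ0 + ∑ j ∈ Finset.Icc 1 J, σ j * Real.cos (j * (x - θ m)) := by
  intro m _ x _
  obtain rfl : θ = uniformGrid n := funext hθ
  have hshift : ∀ f : ℝ → ℝ, Function.Periodic f (2 * π) →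
      ∑ l ∈ Icc 1 n, f (uniformGrid n m - uniformGrid n l) = ∑ l ∈ Icc 1 n, f (uniformGrid n l) :=
    fun f hf => (sum_Icc_comp_uniformGrid_sub hf n m).trans (sum_Icc_comp_uniformGrid hf hodd).symm
  have hsin (j : ℕ) :
      ∑ l ∈ Icc 1 n, ρ (uniformGrid n m - uniformGrid n l) *
        sin (j * (uniformGrid n m - uniformGrid n l)) = 0 :=
    sum_Icc_comp_uniformGrid_sub_eq_zero_of_odd (f := fun t => ρ t * sin (j * t))
      (hρper.mul (sin_nat_mul_periodic j)) (fun t => by rw [mul_neg, sin_neg, hρeven, mul_neg]) n m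
  simp only [hS]
  rw [sum_mul_const_add_mul_sum_cos _ _ _ _ _ _ (uniformGrid n m), hshift ρ hρper, hσ0]
  congr 1
  refine sum_congr rfl fun j _ => ?_
  rw [hshift (fun t => ρ t * cos (j * t)) (hρper.mul (cos_nat_mul_periodic j)), hsin, hσ]
  ring

theorem smoothing_kernel_covariance_sum
    (n : ℕ) (hn : 3 ≤ n) (hodd : Odd n)
    (J : ℕ) (hJ : (J : ℝ) < (n : ℝ) / 2)
    (θ : ℕ → ℝ)
    (hθ : ∀ l, θ l = -((n : ℝ) + 1) * Real.pi / n + 2 * Real.pi * l / n)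
    (S : ℕ → ℝ → ℝ)
    (hS : ∀ l x, S l x =
      1 / (n : ℝ) + (2 / (n : ℝ)) * ∑ j ∈ Finset.Icc 1 J, Real.cos (j * (x - θ l)))
    (ρ : ℝ → ℝ) (hρeven : ∀ x, ρ (-x) = ρ x)
    (hρper : Function.Periodic ρ (2 * Real.pi))
    (σ0 : ℝ) (hσ0 : σ0 = (1 / (n : ℝ)) * ∑ l ∈ Finset.Icc 1 n, ρ (θ l))
    (σ : ℕ → ℝ)
    (hσ : ∀ j, σ j = (2 / (n : ℝ)) * ∑ l ∈ Finset.Icc 1 n, ρ (θ l) * Real.cos (j * θ l)) :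
    ∀ m ∈ Finset.Icc 1 n, ∀ x ∈ Set.Icc (-Real.pi) Real.pi,
      ∑ l ∈ Finset.Icc 1 n, ρ (θ m - θ l) * S l x =
        σ0 + ∑ j ∈ Finset.Icc 1 J, σ j * Real.cos (j * (x - θ m)) :=
  smoothing_kernel_covariance_sum_general n hodd J θ hθ S hS ρ hρeven hρper σ0 hσ0 σ hσ
end

section
/- Let n be odd, J < n/2, θ_l = -(n+1)π/n + 2πl/n, and S_l(θ) = 1/n + (2/n)∑_{j=1}^J cos(j(θ − θ_l)). Let ρ be even and 2π-periodic with discrete Fourier coefficients σ²ⱼ,ₙ as above. Then the double sum ∑_{l=1}^n ∑_{m=1}^n ρ(θ_m − θ_l) S_l(θ) S_m(η) = σ²₀,ₙ + ∑_{j=1}^J σ²ⱼ,ₙ cos(j(η − θ)), i.e., it depends only on η − θ. -/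
/-!
With `c = (n + 1) / 2`, which is an integer because `n` is odd, the nodes are `θ l = 2π(l - c)/n`.
A sum over `l ∈ [1, n]` of an `n`-periodic function of `l` is invariant under integer shifts of
`l`. Applied to `l ↦ e^{itθ l}` this gives the discrete orthogonality of `cos (k θ)`, `0 < |k| < n`,
so that for `2J < n` the kernel `S l` reproduces cosine polynomials of degree `≤ J` from their
values at the nodes. Applied to `m ↦ g (θ m - θ l)` with `g` `2π`-periodic it gives
`∑ m, g (θ m - θ l) = ∑ m, g (θ m)`; together with `θ (n + 1 - m) = -θ m` and the evenness of `ρ`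
this turns the inner sum over `m` into `σ0 + ∑ j, σ j cos (j (η - θ l))`, and the outer sum over
`l` then replaces `θ l` by `x`.
-/

open Real Finset

theorem Finset.sum_range_add_one_of_eq {M : Type*} [AddCommMonoid M] {f : ℕ → M} {n : ℕ}
    (hf : f n = f 0) : ∑ k ∈ range n, f (k + 1) = ∑ k ∈ range n, f k := by
  cases n with
  | zero => rfl
  | succ n => rw [sum_range_succ, hf, sum_range_succ']

theorem Function.Periodic.sum_Icc_add {M : Type*} [AddCommMonoid M] {G : ℤ → M} {n : ℕ}
    (hG : Function.Periodic G n) (a : ℤ) :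
    ∑ m ∈ Icc 1 n, G (m + a) = ∑ m ∈ Icc 1 n, G m := by
  have step : ∀ b : ℤ, ∑ m ∈ Icc 1 n, G (m + (b + 1)) = ∑ m ∈ Icc 1 n, G (m + b) := by
    intro b
    have hwrap : G (n + 1 + b) = G (0 + 1 + b) := by
      rw [show (n : ℤ) + 1 + b = 0 + 1 + b + n by ring, hG]
    have key := sum_range_add_one_of_eq (f := fun k : ℕ => G (k + 1 + b)) (by simpa using hwrap)
    rw [← Ico_add_one_right_eq_Icc, sum_Ico_eq_sum_range, sum_Ico_eq_sum_range]
    convert key using 3 <;> push_cast <;> ring_nf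
  induction a using Int.induction_on with
  | zero => simp
  | succ a ih => rw [step, ih]
  | pred a ih => rw [← ih, ← step, sub_add_cancel]

section Orthogonality

variable {n : ℕ} {θ : ℕ → ℝ} {c : ℝ}

theorem sum_cos_grid_eq_zero (hθ : ∀ l, θ l = 2 * π * (l - c) / n) {t : ℤ}
    (ht : ¬ (n : ℤ) ∣ t) (φ : ℝ) : ∑ l ∈ Icc 1 n, cos (t * θ l + φ) = 0 := by
  obtain rfl | hn := eq_or_ne n 0
  · simp
  have hn' : (n : ℂ) ≠ 0 := Nat.cast_ne_zero.mpr hn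
  set w := Complex.exp (2 * π * Complex.I / n) ^ t
  let G : ℤ → ℂ := fun k => Complex.exp (↑(t * (2 * π * (k - c) / n) + φ) * Complex.I)
  have hG : Function.Periodic G n := by
    intro k
    have : (↑(t * (2 * π * ((↑(k + n) : ℝ) - c) / n) + φ) : ℂ) * Complex.I
        = ↑(t * (2 * π * (k - c) / n) + φ) * Complex.I + t * (2 * π * Complex.I) := by
      push_cast; field_simp; ring
    simp only [G, this, Complex.exp_add, Complex.exp_int_mul_two_pi_mul_I, mul_one]
  have hshift : ∀ k, G (k + 1) = w * G k := by
    intro k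
    have : (↑(t * (2 * π * ((↑(k + 1) : ℝ) - c) / n) + φ) : ℂ) * Complex.I
        = t * (2 * π * Complex.I / n) + ↑(t * (2 * π * (k - c) / n) + φ) * Complex.I := by
      push_cast; field_simp; ring
    simp only [G, this, Complex.exp_add, Complex.exp_int_mul, w]
  have hw : w ≠ 1 := by
    rwa [Ne, (Complex.isPrimitiveRoot_exp n hn).zpow_eq_one_iff_dvd]
  -- shifting the index multiplies the sum by `w ≠ 1` but, by periodicity, does not change it
  have hsum : ∑ m ∈ Icc 1 n, G m = 0 := by
    have := hG.sum_Icc_add 1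
    simp only [hshift, ← mul_sum] at this
    have h0 : (w - 1) * ∑ m ∈ Icc 1 n, G m = 0 := by rw [sub_mul, this, one_mul, sub_self]
    exact (mul_eq_zero.mp h0).resolve_left (sub_ne_zero.mpr hw)
  calc ∑ l ∈ Icc 1 n, cos (t * θ l + φ) = (∑ m ∈ Icc 1 n, G m).re := by
        rw [Complex.re_sum]
        refine sum_congr rfl fun l _ => ?_
        simp only [G, Complex.exp_ofReal_mul_I_re, hθ, Int.cast_natCast]
    _ = 0 := by rw [hsum, Complex.zero_re]

theorem sum_cos_nat_mul_sub_grid (hθ : ∀ l, θ l = 2 * π * (l - c) / n) {k : ℕ} (hk : k < n)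
    (y : ℝ) : ∑ l ∈ Icc 1 n, cos (k * (y - θ l)) = if k = 0 then (n : ℝ) else 0 := by
  split_ifs with hk0
  · simp [hk0]
  have hdvd : ¬ (n : ℤ) ∣ -k := fun h => by
    have := Int.eq_zero_of_abs_lt_dvd h (abs_lt.mpr ⟨by omega, by omega⟩)
    omega
  rw [← sum_cos_grid_eq_zero hθ hdvd (k * y)]
  refine sum_congr rfl fun l _ => ?_
  push_cast
  ring_nf

theorem sum_cos_mul_cos_grid (hθ : ∀ l, θ l = 2 * π * (l - c) / n) {i k : ℕ} (hi : 0 < i)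
    (hik : i + k < n) (x η : ℝ) :
    ∑ l ∈ Icc 1 n, cos (i * (x - θ l)) * cos (k * (η - θ l))
      = if i = k then (n : ℝ) / 2 * cos (k * (η - x)) else 0 := by
  have hsum : ¬ (n : ℤ) ∣ -(i + k : ℤ) := fun h => by
    have := Int.eq_zero_of_abs_lt_dvd h (abs_lt.mpr ⟨by omega, by omega⟩)
    omega
  have htwice : 2 * ∑ l ∈ Icc 1 n, cos (i * (x - θ l)) * cos (k * (η - θ l))
      = ∑ l ∈ Icc 1 n, cos (((k - i : ℤ) : ℝ) * θ l + (i * x - k * η))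
        + ∑ l ∈ Icc 1 n, cos (((-(i + k) : ℤ) : ℝ) * θ l + (i * x + k * η)) := by
    rw [mul_sum, ← sum_add_distrib]
    refine sum_congr rfl fun l _ => ?_
    rw [← mul_assoc, Real.two_mul_cos_mul_cos]
    congr 1 <;> congr 1 <;> push_cast <;> ring
  rw [sum_cos_grid_eq_zero hθ hsum, add_zero] at htwice
  split_ifs with hik'
  · subst hik'
    simp only [sub_self, Int.cast_zero, zero_mul, zero_add, sum_const, Nat.card_Icc,
      Nat.add_sub_cancel, nsmul_eq_mul] at htwice
    rw [← cos_neg, show -(i * (η - x)) = i * x - i * η by ring]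
    linarith
  · have hdiff : ¬ (n : ℤ) ∣ (k - i : ℤ) := fun h => by
      have := Int.eq_zero_of_abs_lt_dvd h (abs_lt.mpr ⟨by omega, by omega⟩)
      omega
    rw [sum_cos_grid_eq_zero hθ hdiff] at htwice
    linarith

theorem sum_dirichlet_mul_cos (hθ : ∀ l, θ l = 2 * π * (l - c) / n) {J : ℕ} (hJ : 2 * J < n)
    {S : ℕ → ℝ → ℝ}
    (hS : ∀ l y, S l y = 1 / (n : ℝ) + (2 / (n : ℝ)) * ∑ j ∈ Icc 1 J, cos (j * (y - θ l)))
    {k : ℕ} (hk : k ≤ J) (x η : ℝ) :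
    ∑ l ∈ Icc 1 n, S l x * cos (k * (η - θ l)) = cos (k * (η - x)) := by
  have hn : (n : ℝ) ≠ 0 := by norm_cast; omega
  calc ∑ l ∈ Icc 1 n, S l x * cos (k * (η - θ l))
      = 1 / n * ∑ l ∈ Icc 1 n, cos (k * (η - θ l)) + 2 / n *
          ∑ i ∈ Icc 1 J, ∑ l ∈ Icc 1 n, cos (i * (x - θ l)) * cos (k * (η - θ l)) := by
        simp only [hS, add_mul, sum_add_distrib, mul_assoc, sum_mul, ← mul_sum]
        rw [sum_comm]
    _ = 1 / n * (if k = 0 then (n : ℝ) else 0) + 2 / n *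
          ∑ i ∈ Icc 1 J, (if i = k then (n : ℝ) / 2 * cos (k * (η - x)) else 0) := by
        rw [sum_cos_nat_mul_sub_grid hθ (by omega)]
        congr 2
        refine sum_congr rfl fun i hi => ?_
        rw [mem_Icc] at hi
        exact sum_cos_mul_cos_grid hθ hi.1 (by omega) x η
    _ = cos (k * (η - x)) := by
        rw [sum_ite_eq']
        rcases Nat.eq_zero_or_pos k with rfl | hk0
        · simp [hn]
        · simp [hk0.ne', Nat.one_le_iff_ne_zero.mpr hk0.ne', hk]
          field_simp

theorem sum_dirichlet_mul_cos_poly (hθ : ∀ l, θ l = 2 * π * (l - c) / n) {J : ℕ}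
    (hJ : 2 * J < n) {S : ℕ → ℝ → ℝ}
    (hS : ∀ l y, S l y = 1 / (n : ℝ) + (2 / (n : ℝ)) * ∑ j ∈ Icc 1 J, cos (j * (y - θ l)))
    (a₀ : ℝ) (a : ℕ → ℝ) (x η : ℝ) :
    ∑ l ∈ Icc 1 n, S l x * (a₀ + ∑ j ∈ Icc 1 J, a j * cos (j * (η - θ l)))
      = a₀ + ∑ j ∈ Icc 1 J, a j * cos (j * (η - x)) := by
  have hconst := sum_dirichlet_mul_cos hθ hJ hS (Nat.zero_le J) x η
  simp only [Nat.cast_zero, zero_mul, cos_zero, mul_one] at hconst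
  simp only [mul_add, mul_sum, sum_add_distrib, ← sum_mul, hconst, one_mul]
  rw [sum_comm]
  congr 1
  refine sum_congr rfl fun j hj => ?_
  simp only [mul_left_comm (S _ x), ← mul_sum]
  rw [sum_dirichlet_mul_cos hθ hJ hS (mem_Icc.mp hj).2]

end Orthogonality

section Convolution

variable {n : ℕ} {θ : ℕ → ℝ} {c : ℤ}

theorem sum_grid_sub_of_periodic {M : Type*} [AddCommMonoid M] {g : ℝ → M}
    (hg : Function.Periodic g (2 * π)) (hθ : ∀ l, θ l = 2 * π * (l - c) / n) (l : ℕ) :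
    ∑ m ∈ Icc 1 n, g (θ m - θ l) = ∑ m ∈ Icc 1 n, g (θ m) := by
  obtain rfl | hn := eq_or_ne n 0
  · simp
  have hn' : (n : ℝ) ≠ 0 := Nat.cast_ne_zero.mpr hn
  let G : ℤ → M := fun k => g (2 * π * k / n)
  have hG : Function.Periodic G n := fun k => by
    simp only [G, Int.cast_add, Int.cast_natCast]
    rw [← hg (2 * π * k / n)]
    congr 1
    field_simp
  have hsub : ∀ m, g (θ m - θ l) = G (m + -(l : ℤ)) := fun m => by
    simp only [G, hθ]
    congr 1
    push_cast
    ring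
  have hgrid : ∀ m, g (θ m) = G (m + -c) := fun m => by
    simp only [G, hθ]
    congr 1
    push_cast
    ring
  simp only [hsub, hgrid, hG.sum_Icc_add]

theorem sum_grid_eq_zero_of_odd {h : ℝ → ℝ} (hh : Function.Odd h)
    (hθ : ∀ l, θ l = 2 * π * (l - c) / n) (hc : 2 * c = n + 1) :
    ∑ m ∈ Icc 1 n, h (θ m) = 0 := by
  have hn : (n : ℝ) ≠ 0 := by
    norm_cast
    rintro rfl
    omega
  have hsymm : ∀ m ∈ Icc 1 n, θ (n + 1 - m) = -θ m := fun m hm => by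
    have hc' : (2 * c : ℝ) = n + 1 := by exact_mod_cast hc
    rw [mem_Icc] at hm
    rw [hθ, hθ, Nat.cast_sub (by omega)]
    push_cast
    field_simp
    linarith
  have hreflect : ∑ m ∈ Icc 1 n, h (θ (n + 1 - m)) = ∑ m ∈ Icc 1 n, h (θ m) :=
    sum_nbij' (fun m => n + 1 - m) (fun m => n + 1 - m) (by simp; omega) (by simp; omega)
      (by simp; omega) (by simp; omega) (fun _ _ => rfl)
  rw [sum_congr rfl fun m hm => by rw [hsymm m hm, hh], sum_neg_distrib] at hreflect
  linarith

theorem sum_even_grid_sub_mul_cos {ρ : ℝ → ℝ} (hρ : Function.Even ρ)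
    (hρper : Function.Periodic ρ (2 * π)) (hθ : ∀ l, θ l = 2 * π * (l - c) / n)
    (hc : 2 * c = n + 1) (j l : ℕ) (η : ℝ) :
    ∑ m ∈ Icc 1 n, ρ (θ m - θ l) * cos (j * (η - θ m))
      = cos (j * (η - θ l)) * ∑ m ∈ Icc 1 n, ρ (θ m) * cos (j * θ m) := by
  have hper : Function.Periodic (fun y => ρ y * cos (j * (η - θ l - y))) (2 * π) :=
    hρper.mul fun y => by
      rw [show j * (η - θ l - (y + 2 * π)) = j * (η - θ l - y) - j * (2 * π) by ring,
        cos_sub_nat_mul_two_pi]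
  have hsin : Function.Odd fun y => sin (j * y) := fun y => by simp only [mul_neg, sin_neg]
  calc ∑ m ∈ Icc 1 n, ρ (θ m - θ l) * cos (j * (η - θ m))
      = ∑ m ∈ Icc 1 n, ρ (θ m) * cos (j * (η - θ l - θ m)) := by
        rw [← sum_grid_sub_of_periodic hper hθ l]
        simp only [sub_sub_sub_cancel_right]
    _ = cos (j * (η - θ l)) * ∑ m ∈ Icc 1 n, ρ (θ m) * cos (j * θ m)
          + sin (j * (η - θ l)) * ∑ m ∈ Icc 1 n, ρ (θ m) * sin (j * θ m) := by
        rw [mul_sum, mul_sum, ← sum_add_distrib]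
        refine sum_congr rfl fun m _ => ?_
        rw [mul_sub, cos_sub]
        ring
    _ = cos (j * (η - θ l)) * ∑ m ∈ Icc 1 n, ρ (θ m) * cos (j * θ m) := by
        rw [sum_grid_eq_zero_of_odd (h := fun y => ρ y * sin (j * y)) (hρ.mul_odd hsin) hθ hc,
          mul_zero, add_zero]

theorem sum_even_grid_sub_mul_dirichlet {ρ : ℝ → ℝ} (hρ : Function.Even ρ)
    (hρper : Function.Periodic ρ (2 * π)) (hθ : ∀ l, θ l = 2 * π * (l - c) / n)
    (hc : 2 * c = n + 1) {J : ℕ} {S : ℕ → ℝ → ℝ}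
    (hS : ∀ l y, S l y = 1 / (n : ℝ) + (2 / (n : ℝ)) * ∑ j ∈ Icc 1 J, cos (j * (y - θ l)))
    (l : ℕ) (η : ℝ) :
    ∑ m ∈ Icc 1 n, ρ (θ m - θ l) * S m η
      = 1 / n * ∑ m ∈ Icc 1 n, ρ (θ m) + ∑ j ∈ Icc 1 J,
          2 / n * (∑ m ∈ Icc 1 n, ρ (θ m) * cos (j * θ m)) * cos (j * (η - θ l)) := by
  have hterm : ∀ m, ρ (θ m - θ l) * S m η = 1 / n * ρ (θ m - θ l)
      + ∑ j ∈ Icc 1 J, 2 / n * (ρ (θ m - θ l) * cos (j * (η - θ m))) := fun m => by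
    rw [hS, mul_add, mul_sum, mul_sum, mul_comm]
    exact congrArg _ (sum_congr rfl fun j _ => by ring)
  rw [sum_congr rfl fun m _ => hterm m, sum_add_distrib, ← mul_sum,
    sum_grid_sub_of_periodic hρper hθ, sum_comm]
  congr 1
  refine sum_congr rfl fun j _ => ?_
  rw [← mul_sum, sum_even_grid_sub_mul_cos hρ hρper hθ hc]
  ring

end Convolution

theorem smoothing_kernel_double_sum_stationary_general
    (n : ℕ) (hodd : Odd n)
    (J : ℕ) (hJ : (J : ℝ) < (n : ℝ) / 2)
    (θ : ℕ → ℝ)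
    (hθ : ∀ l, θ l = -((n : ℝ) + 1) * Real.pi / n + 2 * Real.pi * l / n)
    (S : ℕ → ℝ → ℝ)
    (hS : ∀ l x, S l x =
      1 / (n : ℝ) + (2 / (n : ℝ)) * ∑ j ∈ Finset.Icc 1 J, Real.cos (j * (x - θ l)))
    (ρ : ℝ → ℝ) (hρeven : ∀ x, ρ (-x) = ρ x)
    (hρper : Function.Periodic ρ (2 * Real.pi))
    (σ0 : ℝ) (hσ0 : σ0 = (1 / (n : ℝ)) * ∑ l ∈ Finset.Icc 1 n, ρ (θ l))
    (σ : ℕ → ℝ)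
    (hσ : ∀ j, σ j = (2 / (n : ℝ)) * ∑ l ∈ Finset.Icc 1 n, ρ (θ l) * Real.cos (j * θ l)) :
    ∀ x η : ℝ,
      ∑ l ∈ Finset.Icc 1 n, ∑ m ∈ Finset.Icc 1 n, ρ (θ m - θ l) * S l x * S m η =
        σ0 + ∑ j ∈ Finset.Icc 1 J, σ j * Real.cos (j * (η - x)) := by
  intro x η
  obtain ⟨c, hc⟩ : ∃ c : ℤ, 2 * c = n + 1 := by
    obtain ⟨k, hk⟩ := hodd
    exact ⟨k + 1, by omega⟩
  have hθc : ∀ l, θ l = 2 * π * (l - c) / n := fun l => by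
    have hc' : (2 * c : ℝ) = n + 1 := by exact_mod_cast hc
    rw [hθ, ← hc']
    ring
  have h2J : 2 * J < n := by
    have : ((2 * J : ℕ) : ℝ) < n := by push_cast; linarith
    exact_mod_cast this
  calc ∑ l ∈ Icc 1 n, ∑ m ∈ Icc 1 n, ρ (θ m - θ l) * S l x * S m η
      = ∑ l ∈ Icc 1 n, S l x * ∑ m ∈ Icc 1 n, ρ (θ m - θ l) * S m η := by
        refine sum_congr rfl fun l _ => ?_
        rw [mul_sum]
        exact sum_congr rfl fun m _ => by ring
    _ = ∑ l ∈ Icc 1 n, S l x * (σ0 + ∑ j ∈ Icc 1 J, σ j * cos (j * (η - θ l))) := by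
        simp only [sum_even_grid_sub_mul_dirichlet hρeven hρper hθc hc hS, hσ0, hσ]
    _ = σ0 + ∑ j ∈ Icc 1 J, σ j * cos (j * (η - x)) :=
        sum_dirichlet_mul_cos_poly hθc h2J hS σ0 σ x η

theorem smoothing_kernel_double_sum_stationary
    (n : ℕ) (hn : 3 ≤ n) (hodd : Odd n)
    (J : ℕ) (hJ : (J : ℝ) < (n : ℝ) / 2)
    (θ : ℕ → ℝ)
    (hθ : ∀ l, θ l = -((n : ℝ) + 1) * Real.pi / n + 2 * Real.pi * l / n)
    (S : ℕ → ℝ → ℝ)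
    (hS : ∀ l x, S l x =
      1 / (n : ℝ) + (2 / (n : ℝ)) * ∑ j ∈ Finset.Icc 1 J, Real.cos (j * (x - θ l)))
    (ρ : ℝ → ℝ) (hρeven : ∀ x, ρ (-x) = ρ x)
    (hρper : Function.Periodic ρ (2 * Real.pi))
    (σ0 : ℝ) (hσ0 : σ0 = (1 / (n : ℝ)) * ∑ l ∈ Finset.Icc 1 n, ρ (θ l))
    (σ : ℕ → ℝ)
    (hσ : ∀ j, σ j = (2 / (n : ℝ)) * ∑ l ∈ Finset.Icc 1 n, ρ (θ l) * Real.cos (j * θ l)) :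
    ∀ x η : ℝ,
      ∑ l ∈ Finset.Icc 1 n, ∑ m ∈ Finset.Icc 1 n, ρ (θ m - θ l) * S l x * S m η =
        σ0 + ∑ j ∈ Finset.Icc 1 J, σ j * Real.cos (j * (η - x)) :=
  smoothing_kernel_double_sum_stationary_general n hodd J hJ θ hθ S hS ρ hρeven hρper σ0 hσ0 σ hσ
end
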